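/- If a well-ordered sequence A = (a_i)_{i∈I} in a poset P is compatible with a hereditary choice function f (i.e., a_i ∈ f(P − ⋃_{j≺i} F(a_j)) for all i ∈ I), then f_A(X) ⊆ f(X) for every ideal X. -/

import Mathlib

/-- A choice function on the ideals of a poset: `f X` is an ideal contained in `X`. -/
def IsCF {P : Type*} [PartialOrder P] (f : Set P → Set P) : Prop :=
  ∀ X : Set P, IsLowerSet X → f X ⊆ X ∧ IsLowerSet (f X)

/-- Heredity: if `A ⊆ B` then `f B ∩ A ⊆ f A` (for ideals `A`, `B`). -/
def Heredity {P : Type*} [PartialOrder P] (f : Set P → Set P) : Prop :=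
  ∀ A B : Set P, IsLowerSet A → IsLowerSet B → A ⊆ B → f B ∩ A ⊆ f A

/-- Outcast: if `f B ⊆ A ⊆ B` then `f A = f B` (for ideals `A`, `B`). -/
def Outcast {P : Type*} [PartialOrder P] (f : Set P → Set P) : Prop :=
  ∀ A B : Set P, IsLowerSet A → IsLowerSet B → f B ⊆ A → A ⊆ B → f A = f B

/-- The elementary choice function of a well-ordered sequence `a : ι → P`:
`X ∩ I({a_j : j ⪯ i(X)})` where `i(X)` is the least index with `a_{i(X)} ∈ X`,
and `X ∩ I({a_j : j ∈ ι})` if no term of the sequence lies in `X`.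
(Here `j ⪯ i(X)` is expressed by `∀ k < j, a k ∉ X`.) -/
def elemCFW {P : Type*} [PartialOrder P] {ι : Type*} [LinearOrder ι]
    (a : ι → P) (X : Set P) : Set P :=
  X ∩ {y | ∃ j : ι, (∀ k : ι, k < j → a k ∉ X) ∧ y ≤ a j}

/-- The well-ordered sequence `a` is compatible with `f`:
`a i ∈ f (P − ⋃_{j ≺ i} F(a_j))` for every `i`. -/
def CompatibleW {P : Type*} [PartialOrder P] {ι : Type*} [LinearOrder ι]
    (f : Set P → Set P) (a : ι → P) : Prop :=
  ∀ i : ι, a i ∈ f {x | ∀ j : ι, j < i → ¬ a j ≤ x}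

theorem isLowerSet_setOf_forall_not_le {P : Type*} [Preorder P] {ι : Type*} (a : ι → P)
    (p : ι → Prop) : IsLowerSet {x | ∀ k, p k → ¬ a k ≤ x} :=
  fun _ _ hvu hu k hk hak => hu k hk (hak.trans hvu)

theorem subset_setOf_forall_not_le {P : Type*} [Preorder P] {ι : Type*} {a : ι → P}
    {p : ι → Prop} {X : Set P} (hX : IsLowerSet X) (hp : ∀ k, p k → a k ∉ X) :
    X ⊆ {x | ∀ k, p k → ¬ a k ≤ x} :=
  fun _ hx k hk hak => hp k hk (hX hak hx)

theorem compatibleW_elemCFW_subset_general {P : Type*} [PartialOrder P] {ι : Type*}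
    [LinearOrder ι] (f : Set P → Set P)
    (hcf : IsCF f) (hh : Heredity f) (a : ι → P) (ha : CompatibleW f a) :
    ∀ X : Set P, IsLowerSet X → elemCFW a X ⊆ f X := by
  rintro X hX y ⟨hyX, j, hj, hyj⟩
  have hB := isLowerSet_setOf_forall_not_le a (· < j)
  have hyfB : y ∈ f {x | ∀ k, k < j → ¬ a k ≤ x} := (hcf _ hB).2 hyj (ha j)
  exact hh X _ hX hB (subset_setOf_forall_not_le hX hj) ⟨hyfB, hyX⟩

/-- If a well-ordered sequence is compatible with a hereditary choice function `f`,
then `f_A ⊆ f`. -/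
theorem compatibleW_elemCFW_subset {P : Type*} [PartialOrder P] {ι : Type*}
    [LinearOrder ι] [WellFoundedLT ι] (f : Set P → Set P)
    (hcf : IsCF f) (hh : Heredity f) (a : ι → P) (ha : CompatibleW f a) :
    ∀ X : Set P, IsLowerSet X → elemCFW a X ⊆ f X :=
  compatibleW_elemCFW_subset_general f hcf hh a ha
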